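/- arXiv:2301.02215 — 2 statements merged into one kernel-verified Lean document; each statement's English description precedes it below -/
import Mathlib

section
/- For real numbers r, s with r - s > 1/2 and s > 1, there exist d ∈ (1,2), λ > 0, γ > 0 and α, β > 0 such that: αd + β < r - s - λ - γ, α(2-d) > 1/2 + λ, and β(d-1) > λ. Conversely, if such α, β, d exist with λ = γ = 0 in the limiting sense (αd + β < r - s, α(2-d) > 1/2, α > 1/2, β > 0), then r - s > d/(2(2-d)) ≥ 1/2. -/
/-!
All constraints are strict and, along `d = 1 + t`, `α = (1/2 + t²)/(1 - t)`, `β = t`,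
`λ = γ = t²/2`, the left side `αd + β + λ + γ` tends to `1/2 < r - s` as `t → 0⁺`; so a small
`t > 0` works. Conversely `α(2 - d) > 1/2` gives `αd > d/(2(2 - d))`, and `d/(2(2 - d)) ≥ 1/2`
is equivalent to `d ≥ 1`.
-/

open Filter Topology

theorem one_half_le_div_two_mul_two_sub {d : ℝ} (hd1 : 1 ≤ d) (hd2 : d < 2) :
    (1 : ℝ) / 2 ≤ d / (2 * (2 - d)) := by
  rw [le_div_iff₀ (by linarith)]
  linarith

theorem div_two_mul_two_sub_lt_mul {d α : ℝ} (hd0 : 0 < d) (hd2 : d < 2)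
    (hα : 1 / 2 < α * (2 - d)) : d / (2 * (2 - d)) < α * d := by
  rw [div_lt_iff₀ (by linarith)]
  nlinarith

theorem exists_params_of_one_half_lt {ρ : ℝ} (hρ : 1 / 2 < ρ) :
    ∃ d lam γ α β : ℝ, 1 < d ∧ d < 2 ∧ 0 < lam ∧ 0 < γ ∧ 0 < α ∧ 0 < β ∧
      α * d + β < ρ - lam - γ ∧ 1 / 2 + lam < α * (2 - d) ∧ lam < β * (d - 1) := by
  have hlim : Tendsto (fun t : ℝ => (1 / 2 + t ^ 2) / (1 - t) * (1 + t) + t + t ^ 2 / 2 + t ^ 2 / 2)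
      (𝓝[>] 0) (𝓝 (1 / 2)) := by
    have hcont : ContinuousAt
        (fun t : ℝ => (1 / 2 + t ^ 2) / (1 - t) * (1 + t) + t + t ^ 2 / 2 + t ^ 2 / 2) 0 := by
      fun_prop (disch := norm_num)
    simpa using hcont.tendsto.mono_left nhdsWithin_le_nhds
  obtain ⟨t, hlt, ht0, ht1⟩ :=
    ((hlim.eventually (gt_mem_nhds hρ)).and (Ioo_mem_nhdsGT one_pos)).exists
  have h1t : 0 < 1 - t := by linarith
  have hα : (1 / 2 + t ^ 2) / (1 - t) * (2 - (1 + t)) = 1 / 2 + t ^ 2 := by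
    field_simp
    ring
  refine ⟨1 + t, t ^ 2 / 2, t ^ 2 / 2, (1 / 2 + t ^ 2) / (1 - t), t, by linarith, by linarith,
    by positivity, by positivity, by positivity, ht0, by linarith, ?_, ?_⟩
  · rw [hα]
    nlinarith
  · nlinarith

theorem stmt_5_general (r s : ℝ) :
    (1 / 2 < r - s →
      ∃ d lam γ α β : ℝ, 1 < d ∧ d < 2 ∧ 0 < lam ∧ 0 < γ ∧ 0 < α ∧ 0 < β ∧
        α * d + β < r - s - lam - γ ∧
        1 / 2 + lam < α * (2 - d) ∧
        lam < β * (d - 1)) ∧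
    (∀ d α β : ℝ, 1 < d → d < 2 →
      α * d + β < r - s → 1 / 2 < α * (2 - d) → 1 / 2 < α → 0 < β →
      d / (2 * (2 - d)) < r - s ∧ (1 : ℝ) / 2 ≤ d / (2 * (2 - d))) := by
  refine ⟨exists_params_of_one_half_lt, fun d α β hd1 hd2 hsum hα _ hβ => ⟨?_, ?_⟩⟩
  · calc d / (2 * (2 - d)) < α * d := div_two_mul_two_sub_lt_mul (by linarith) hd2 hα
      _ < r - s := by linarith
  · exact one_half_le_div_two_mul_two_sub hd1.le hd2

/-- Nonemptiness of the parameter domain `𝒟(r,s,d,λ,γ)` in the iteration scheme,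
and the converse showing the threshold `r - s > d/(2(2-d)) ≥ 1/2`. -/
theorem stmt_5 (r s : ℝ) (hs : 1 < s) :
    (1 / 2 < r - s →
      ∃ d lam γ α β : ℝ, 1 < d ∧ d < 2 ∧ 0 < lam ∧ 0 < γ ∧ 0 < α ∧ 0 < β ∧
        α * d + β < r - s - lam - γ ∧
        1 / 2 + lam < α * (2 - d) ∧
        lam < β * (d - 1)) ∧
    (∀ d α β : ℝ, 1 < d → d < 2 →
      α * d + β < r - s → 1 / 2 < α * (2 - d) → 1 / 2 < α → 0 < β →
      d / (2 * (2 - d)) < r - s ∧ (1 : ℝ) / 2 ≤ d / (2 * (2 - d))) :=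
  stmt_5_general r s
end

section
/- Let (t_i) satisfy t_{i+1} = t_i^d with d ∈ (1,2) and t₀ ∈ (0,1), and let α, β, λ, γ, r, s > 0 satisfy αd + β < r − s − λ − γ, α(2−d) > 1/2 + λ, β(d−1) > λ. Suppose a_i ≤ t_i^α and L_i ≤ L₀ t_i^{-β}, and that a_{i+1} ≤ (1/2)(t_i^{r-s-λ-γ-β} + t_i^{2α - 1/2 - λ}) and L_{i+1} ≤ t_i^{-λ} L_i. Then a_{i+1} ≤ t_{i+1}^α and L_{i+1} ≤ L₀ t_{i+1}^{-β}. -/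
/-! Since `0 < tᵢ < 1`, the map `p ↦ tᵢ ^ p` is antitone, and `t_{i+1} ^ e = tᵢ ^ (d e)`; so both
claims reduce to comparisons of exponents, which are exactly the three parameter constraints. -/

open Set

theorem mem_Ioo_of_rpow_recursion {d : ℝ} (hd : 0 < d) {t : ℕ → ℝ} (ht0 : t 0 ∈ Ioo 0 1)
    (htrec : ∀ i, t (i + 1) = t i ^ d) (i : ℕ) : t i ∈ Ioo 0 1 := by
  induction i with
  | zero => exact ht0
  | succ n ih =>
    rw [htrec n]
    exact ⟨Real.rpow_pos_of_pos ih.1 d, Real.rpow_lt_one ih.1.le ih.2 hd⟩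

theorem one_half_mul_rpow_add_rpow_le {x p q e : ℝ} (hx : 0 < x) (hx1 : x ≤ 1)
    (hp : e ≤ p) (hq : e ≤ q) : 1 / 2 * (x ^ p + x ^ q) ≤ x ^ e := by
  have := Real.rpow_le_rpow_of_exponent_ge hx hx1 hp
  have := Real.rpow_le_rpow_of_exponent_ge hx hx1 hq
  linarith

theorem stmt_18_general (d α β lam γ r s L0 : ℝ)
    (hd1 : 1 < d)
    (hL0 : 0 ≤ L0)
    (hc1 : α * d + β < r - s - lam - γ)
    (hc2 : 1 / 2 + lam < α * (2 - d))
    (hc3 : lam < β * (d - 1))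
    (t : ℕ → ℝ) (ht0 : t 0 ∈ Set.Ioo (0 : ℝ) 1) (htrec : ∀ i, t (i + 1) = t i ^ d)
    (a L : ℕ → ℝ) (i : ℕ)
    (hL : L i ≤ L0 * t i ^ (-β))
    (ha' : a (i + 1) ≤ 1 / 2 * (t i ^ (r - s - lam - γ - β) + t i ^ (2 * α - 1 / 2 - lam)))
    (hL' : L (i + 1) ≤ t i ^ (-lam) * L i) :
    a (i + 1) ≤ t (i + 1) ^ α ∧ L (i + 1) ≤ L0 * t (i + 1) ^ (-β) := by
  obtain ⟨ht, ht1⟩ := mem_Ioo_of_rpow_recursion (by linarith) ht0 htrec i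
  have hpow (e : ℝ) : t (i + 1) ^ e = t i ^ (d * e) := by rw [htrec, ← Real.rpow_mul ht.le]
  refine ⟨?_, ?_⟩
  · rw [hpow]
    exact ha'.trans (one_half_mul_rpow_add_rpow_le ht ht1.le (by nlinarith) (by nlinarith))
  · calc L (i + 1) ≤ t i ^ (-lam) * (L0 * t i ^ (-β)) :=
          hL'.trans (mul_le_mul_of_nonneg_left hL (by positivity))
      _ = L0 * t i ^ (-lam + -β) := by rw [Real.rpow_add ht]; ring
      _ ≤ L0 * t (i + 1) ^ (-β) := by
          rw [hpow]
          exact mul_le_mul_of_nonneg_left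
            (Real.rpow_le_rpow_of_exponent_ge ht ht1.le (by nlinarith)) hL0

/-- Inductive step of the two-norm Nash–Moser iteration: under the parameter
constraints, if `a_i ≤ t_i^α`, `L_i ≤ L₀ t_i^{-β}`,
`a_{i+1} ≤ ½(t_i^{r-s-λ-γ-β} + t_i^{2α-1/2-λ})` and `L_{i+1} ≤ t_i^{-λ} L_i`,
then `a_{i+1} ≤ t_{i+1}^α` and `L_{i+1} ≤ L₀ t_{i+1}^{-β}`, where `t_{i+1} = t_i^d`. -/
theorem stmt_18 (d α β lam γ r s L0 : ℝ)
    (hd1 : 1 < d) (hd2 : d < 2)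
    (hα : 0 < α) (hβ : 0 < β) (hlam : 0 < lam) (hγ : 0 < γ)
    (hs : 0 < s) (hrs : s < r) (hL0 : 0 ≤ L0)
    (hc1 : α * d + β < r - s - lam - γ)
    (hc2 : 1 / 2 + lam < α * (2 - d))
    (hc3 : lam < β * (d - 1))
    (t : ℕ → ℝ) (ht0 : t 0 ∈ Set.Ioo (0 : ℝ) 1) (htrec : ∀ i, t (i + 1) = t i ^ d)
    (a L : ℕ → ℝ) (i : ℕ)
    (ha : a i ≤ t i ^ α) (hL : L i ≤ L0 * t i ^ (-β))
    (ha' : a (i + 1) ≤ 1 / 2 * (t i ^ (r - s - lam - γ - β) + t i ^ (2 * α - 1 / 2 - lam)))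
    (hL' : L (i + 1) ≤ t i ^ (-lam) * L i) :
    a (i + 1) ≤ t (i + 1) ^ α ∧ L (i + 1) ≤ L0 * t (i + 1) ^ (-β) :=
  stmt_18_general d α β lam γ r s L0 hd1 hL0 hc1 hc2 hc3 t ht0 htrec a L i hL ha' hL'
end
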